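/- For every modal formula φ: φ ∈ GL if and only if every transitive Kripke frame of locally finite height validates φ. -/

import Mathlib

/-- Modal formulas over a countable set of propositional variables. -/
inductive Fml : Type where
  | prop : ℕ → Fml
  | top : Fml
  | and : Fml → Fml → Fml
  | neg : Fml → Fml
  | box : Fml → Fml

namespace Fml
/-- `⊥` abbreviates `¬⊤`. -/
def bot : Fml := neg top
/-- `φ ∨ ψ` abbreviates `¬(¬φ ∧ ¬ψ)`. -/
def or (φ ψ : Fml) : Fml := neg (and (neg φ) (neg ψ))
/-- `φ ⊃ ψ` abbreviates `¬(φ ∧ ¬ψ)`. -/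
def imp (φ ψ : Fml) : Fml := neg (and φ (neg ψ))
/-- `◇φ` abbreviates `¬□¬φ`. -/
def dia (φ : Fml) : Fml := neg (box (neg φ))
/-- `◇ⁿφ`: n-fold application of `◇`. -/
def dian : ℕ → Fml → Fml
  | 0, φ => φ
  | n+1, φ => dia (dian n φ)
end Fml

/-- Truth of a modal formula at a world of a Kripke model `(W, R, v)`. -/
def Truth {W : Type} (R : W → W → Prop) (v : ℕ → Set W) : Fml → W → Prop
  | .prop n, w => w ∈ v n
  | .top, _ => True
  | .and φ ψ, w => Truth R v φ w ∧ Truth R v ψ w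
  | .neg φ, w => ¬ Truth R v φ w
  | .box φ, w => ∀ w', R w w' → Truth R v φ w'

/-- A frame validates `φ` if `φ` is true at every world under every valuation. -/
def Valid {W : Type} (R : W → W → Prop) (φ : Fml) : Prop :=
  ∀ (v : ℕ → Set W) (w : W), Truth R v φ w

/-- A frame is of locally finite height if for every world `w`, the supremum of
lengths of `R`-chains starting at `w` is finite. -/
def LocallyFiniteHeight {W : Type} (R : W → W → Prop) : Prop :=
  ∀ w : W, ∃ N : ℕ, ∀ (n : ℕ) (c : ℕ → W),
    c 0 = w → (∀ i < n, R (c i) (c (i+1))) → n ≤ N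

/-- Boolean evaluation treating propositional variables and boxed formulas as atoms. -/
def beval (f : Fml → Bool) : Fml → Bool
  | .prop n => f (.prop n)
  | .top => true
  | .and φ ψ => beval f φ && beval f ψ
  | .neg φ => !(beval f φ)
  | .box φ => f (.box φ)

/-- Classical propositional tautologies (in the modal language). -/
def Taut (φ : Fml) : Prop := ∀ f : Fml → Bool, beval f φ = true

/-- Uniform substitution. -/
def fsubst (σ : ℕ → Fml) : Fml → Fml
  | .prop n => σ n
  | .top => .top
  | .and φ ψ => .and (fsubst σ φ) (fsubst σ ψ)
  | .neg φ => .neg (fsubst σ φ)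
  | .box φ => .box (fsubst σ φ)

/-- The axiom K : `□(p ⊃ q) ⊃ (□p ⊃ □q)`. -/
def axK : Fml :=
  Fml.imp (Fml.box (Fml.imp (Fml.prop 0) (Fml.prop 1)))
    (Fml.imp (Fml.box (Fml.prop 0)) (Fml.box (Fml.prop 1)))

/-- The axiom 4 : `□p ⊃ □□p`. -/
def axFour : Fml :=
  Fml.imp (Fml.box (Fml.prop 0)) (Fml.box (Fml.box (Fml.prop 0)))

/-- The Löb formula : `□(□p ⊃ p) ⊃ □p`. -/
def axLob : Fml :=
  Fml.imp (Fml.box (Fml.imp (Fml.box (Fml.prop 0)) (Fml.prop 0)))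
    (Fml.box (Fml.prop 0))

/-- The logic `GL`: the smallest normal modal logic containing the Löb formula. -/
inductive GLProv : Fml → Prop where
  | taut {φ} : Taut φ → GLProv φ
  | axK : GLProv axK
  | axLob : GLProv axLob
  | mp {φ ψ} : GLProv (Fml.imp φ ψ) → GLProv φ → GLProv ψ
  | usub {φ} (σ : ℕ → Fml) : GLProv φ → GLProv (fsubst σ φ)
  | nec {φ} : GLProv φ → GLProv (Fml.box φ)

/-!
Soundness: in a transitive frame of locally finite height the converse relation is well-founded,
and on such frames Löb's axiom holds by well-founded induction.

Completeness: if `φ ∉ GL`, take as worlds the truth assignments on the subformulas of `φ` whose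
diagram, the conjunction of the subformulas signed by their truth values, is GL-consistent. Let
`u` be accessible from `s` when every boxed subformula `□B` true at `s` is true at `u` together
with `B`, and some boxed subformula false at `s` is true at `u`. This relation is transitive, and
the set of true boxed subformulas grows strictly along it, so chains are no longer than the list
of subformulas. In the truth lemma for a false `□A` the required successor comes from the
consistency of `□A ∧ ¬A ∧ ⋀{□B ∧ B | □B true at s}`, which is where Löb's axiom is used. A finite
Lindenbaum argument extends `¬φ` to a world refuting `φ`.
-/

section Propositional

variable {f : Fml → Bool} {A B : Fml}

@[simp] theorem beval_and_eq_true :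
    beval f (A.and B) = true ↔ beval f A = true ∧ beval f B = true := by simp [beval]

@[simp] theorem beval_neg_eq_true : beval f A.neg = true ↔ ¬ beval f A = true := by simp [beval]

@[simp] theorem beval_imp_eq_true :
    beval f (A.imp B) = true ↔ (beval f A = true → beval f B = true) := by simp [Fml.imp]

@[simp] theorem beval_top_eq_true : beval f .top = true := rfl

@[simp] theorem beval_bot_eq_true : ¬ beval f .bot = true := by simp [Fml.bot]

end Propositional

namespace GLProv

variable {A B C : Fml}

theorem imp_self (A : Fml) : GLProv (A.imp A) := taut fun _ => by simp

theorem imp_intro (A : Fml) (h : GLProv B) : GLProv (A.imp B) :=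
  mp (taut fun _ => by simp; tauto) h

theorem imp_trans (h₁ : GLProv (A.imp B)) (h₂ : GLProv (B.imp C)) : GLProv (A.imp C) :=
  mp (mp (taut fun _ => by simp; tauto) h₁) h₂

theorem and_left (A B : Fml) : GLProv ((A.and B).imp A) := taut fun _ => by simp; tauto

theorem and_right (A B : Fml) : GLProv ((A.and B).imp B) := taut fun _ => by simp

theorem imp_and (h₁ : GLProv (C.imp A)) (h₂ : GLProv (C.imp B)) : GLProv (C.imp (A.and B)) :=
  mp (mp (taut fun _ => by simp; tauto) h₁) h₂

theorem axK_subst (A B : Fml) : GLProv ((A.imp B).box.imp (A.box.imp B.box)) := by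
  simpa [_root_.axK, fsubst, Fml.imp] using usub (fun n => if n = 0 then A else B) axK

theorem axLob_subst (A : Fml) : GLProv ((A.box.imp A).box.imp A.box) := by
  simpa [_root_.axLob, fsubst, Fml.imp] using usub (fun _ => A) axLob

theorem box_mono (h : GLProv (A.imp B)) : GLProv (A.box.imp B.box) :=
  mp (axK_subst A B) (nec h)

theorem box_and (A B : Fml) : GLProv ((A.box.and B.box).imp (A.and B).box) := by
  have h : GLProv (A.box.imp (B.box.imp (A.and B).box)) :=
    (box_mono (taut fun _ => by simp; tauto)).imp_trans (axK_subst B (A.and B))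
  exact mp (taut fun _ => by simp) h

theorem four (A : Fml) : GLProv (A.box.imp A.box.box) := by
  -- Löb's axiom for `A ∧ □A`
  have h : GLProv (A.imp ((A.and A.box).box.imp (A.and A.box))) :=
    mp (taut fun _ => by simp; tauto) (box_mono (and_left A A.box))
  exact ((box_mono h).imp_trans (axLob_subst _)).imp_trans (box_mono (and_right A A.box))

end GLProv

section Frames

variable {W : Type} {R : W → W → Prop}

theorem LocallyFiniteHeight.wellFounded_flip (h : LocallyFiniteHeight R) :
    WellFounded (flip R) := by
  refine wellFounded_iff_isEmpty_descending_chain.mpr ⟨fun ⟨c, hc⟩ => ?_⟩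
  obtain ⟨N, hN⟩ := h (c 0)
  exact N.not_succ_le_self (hN (N + 1) c rfl fun i _ => hc i)

theorem LocallyFiniteHeight.of_bounded_rank (μ : W → ℕ) (B : ℕ) (hB : ∀ w, μ w ≤ B)
    (hμ : ∀ x y, R x y → μ x < μ y) : LocallyFiniteHeight R := by
  refine fun w => ⟨B, fun n c _ hc => ?_⟩
  have hgrow : ∀ i ≤ n, i ≤ μ (c i) := by
    intro i
    induction i with
    | zero => simp
    | succ i ih => exact fun hi => (ih (by omega)).trans_lt (hμ _ _ (hc i (by omega)))
  exact (hgrow n le_rfl).trans (hB _)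

end Frames

section Soundness

variable {W : Type} {R : W → W → Prop} {v : ℕ → Set W}

theorem truth_imp {w : W} {A B : Fml} :
    Truth R v (A.imp B) w ↔ (Truth R v A w → Truth R v B w) := by
  simp only [Fml.imp, Truth]; tauto

theorem beval_eq_true_iff_truth {f : Fml → Bool} {w : W} (hf : ∀ B, f B = true ↔ Truth R v B w)
    (A : Fml) : beval f A = true ↔ Truth R v A w := by
  induction A with
  | neg A ih => exact beval_neg_eq_true.trans (not_congr ih)
  | _ => simp_all [beval, Truth]

theorem valid_of_taut {A : Fml} (h : Taut A) : Valid R A := by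
  classical
  exact fun v w => (beval_eq_true_iff_truth (fun _ => decide_eq_true_iff) A).mp (h _)

theorem truth_fsubst (σ : ℕ → Fml) (A : Fml) (w : W) :
    Truth R v (fsubst σ A) w ↔ Truth R (fun n => {x | Truth R v (σ n) x}) A w := by
  induction A generalizing w <;> simp_all [fsubst, Truth]

theorem valid_axK : Valid R axK := by
  intro v w
  simp only [axK, truth_imp, Truth]
  exact fun h₁ h₂ u hu => h₁ u hu (h₂ u hu)

theorem valid_axLob (hT : Transitive R) (hwf : WellFounded (flip R)) : Valid R axLob := by
  intro v w
  simp only [axLob, truth_imp, Truth]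
  intro hlob u hu
  induction u using hwf.induction with
  | h u ih => exact hlob u hu fun u' hu' => ih u' hu' (hT hu hu')

theorem GLProv.valid (hT : Transitive R) (hwf : WellFounded (flip R)) {A : Fml} (h : GLProv A) :
    Valid R A := by
  induction h with
  | taut h => exact valid_of_taut h
  | axK => exact valid_axK
  | axLob => exact valid_axLob hT hwf
  | mp _ _ ih₁ ih₂ => exact fun v w => truth_imp.mp (ih₁ v w) (ih₂ v w)
  | usub σ _ ih => exact fun v w => (truth_fsubst σ _ w).mpr (ih _ w)
  | nec _ ih => exact fun v _ u _ => ih v u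

end Soundness

namespace Fml

def conj : List Fml → Fml
  | [] => top
  | A :: Γ => and A (conj Γ)

def signed (b : Bool) (A : Fml) : Fml := cond b A A.neg

def diagram (L : List Fml) (t : Fml → Bool) : Fml := conj (L.map fun A => signed (t A) A)

def subformulas : Fml → List Fml
  | prop n => [prop n]
  | top => [top]
  | and A B => and A B :: (subformulas A ++ subformulas B)
  | neg A => neg A :: subformulas A
  | box A => box A :: subformulas A

theorem mem_subformulas_self (A : Fml) : A ∈ A.subformulas := by
  cases A <;> simp [subformulas]

theorem subformulas_subset_of_mem {A B : Fml} (h : B ∈ A.subformulas) :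
    B.subformulas ⊆ A.subformulas := by
  induction A with
  | prop | top => simp_all [subformulas]
  | and A₁ A₂ ih₁ ih₂ =>
    simp only [subformulas, List.mem_cons, List.mem_append] at h
    rcases h with rfl | h | h
    · exact List.Subset.refl _
    · exact List.Subset.trans (ih₁ h) fun _ => by simp_all [subformulas]
    · exact List.Subset.trans (ih₂ h) fun _ => by simp_all [subformulas]
  | neg A ih | box A ih =>
    simp only [subformulas, List.mem_cons] at h
    rcases h with rfl | h
    · exact List.Subset.refl _
    · exact List.Subset.trans (ih h) fun _ => by simp_all [subformulas]

end Fml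

open Fml

namespace GLProv

variable {A : Fml}

theorem conj_imp_of_mem {Γ : List Fml} (h : A ∈ Γ) : GLProv ((conj Γ).imp A) := by
  induction Γ with
  | nil => cases h
  | cons B Γ ih =>
    rcases List.mem_cons.mp h with rfl | h
    · exact and_left _ _
    · exact (and_right _ _).imp_trans (ih h)

theorem imp_box_conj {θ : Fml} {Γ : List Fml} (h : ∀ A ∈ Γ, GLProv (θ.imp A.box)) :
    GLProv (θ.imp (conj Γ).box) := by
  induction Γ with
  | nil => exact imp_intro _ (nec (taut fun _ => rfl))
  | cons B Γ ih =>
    have hB := h B List.mem_cons_self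
    have hΓ := ih fun A hA => h A (List.mem_cons_of_mem _ hA)
    exact (imp_and hB hΓ).imp_trans (box_and _ _)

theorem diagram_imp_signed {L : List Fml} {t : Fml → Bool} (hA : A ∈ L) :
    GLProv ((diagram L t).imp (signed (t A) A)) :=
  conj_imp_of_mem (List.mem_map_of_mem hA)

theorem signed_and (a b : Bool) (A B : Fml) :
    GLProv (((signed a A).and (signed b B)).imp (signed (a && b) (A.and B))) :=
  taut fun _ => by cases a <;> cases b <;> simp [signed] <;> grind

theorem signed_neg (a : Bool) (A : Fml) : GLProv ((signed a A).imp (signed (!a) A.neg)) :=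
  taut fun _ => by cases a <;> simp [signed]

end GLProv

def GLConsistent (A : Fml) : Prop := ¬ GLProv (A.imp .bot)

namespace GLConsistent

open GLProv

variable {A B : Fml}

theorem mono (h : GLProv (A.imp B)) (hA : GLConsistent A) : GLConsistent B :=
  fun hB => hA (h.imp_trans hB)

theorem exists_and_signed (hA : GLConsistent A) (B : Fml) :
    ∃ b, GLConsistent (A.and (signed b B)) := by
  by_contra! h
  simp only [GLConsistent, not_not] at h
  exact hA (mp (mp (taut fun _ => by simp [signed]; grind) (h true)) (h false))

theorem eq_of_imp_diagram {L : List Fml} {t : Fml → Bool} {b : Bool} (hA : GLConsistent A)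
    (hd : GLProv (A.imp (diagram L t))) (hB : B ∈ L) (h : GLProv (A.imp (signed b B))) :
    t B = b := by
  by_contra hne
  refine hA (mp (mp (taut fun _ => ?_) (hd.imp_trans (diagram_imp_signed hB))) h)
  cases b <;> simp_all [signed]

theorem exists_and_diagram (L : List Fml) (hA : GLConsistent A) :
    ∃ t, GLConsistent (A.and (diagram L t)) := by
  classical
  induction L generalizing A with
  | nil => exact ⟨fun _ => true, hA.mono (taut fun _ => by simp [diagram, conj])⟩
  | cons B L ih =>
    obtain ⟨b, hb⟩ := hA.exists_and_signed B
    obtain ⟨t, ht⟩ := ih hb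
    have htB : ∀ C ∈ L, Function.update t B b C = t C := by
      intro C hC
      rcases eq_or_ne C B with rfl | hne
      · simpa using (ht.eq_of_imp_diagram (and_right _ _) hC
          ((and_left _ _).imp_trans (and_right _ _))).symm
      · exact Function.update_of_ne hne _ _
    refine ⟨Function.update t B b, ht.mono ?_⟩
    simp only [diagram, List.map_cons, conj, Function.update_self, List.map_congr_left
      fun C hC => congrArg (signed · C) (htB C hC)]
    exact taut fun _ => by simp; tauto

end GLConsistent

namespace Canonical

open GLProv

variable (L : List Fml)

def World : Type := {t : Fml → Bool // GLConsistent (diagram L t)}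

def boxedTrue (t : Fml → Bool) : List Fml :=
  L.filterMap fun
    | box A => if t (box A) then some A else none
    | _ => none

def boxedConj (t : Fml → Bool) : Fml := conj ((boxedTrue L t).map fun B => B.box.and B)

def Rel (s u : World L) : Prop :=
  (∀ A ∈ boxedTrue L s.1, A ∈ boxedTrue L u.1 ∧ u.1 A = true) ∧
    ∃ A ∈ boxedTrue L u.1, A ∉ boxedTrue L s.1

def val (n : ℕ) : Set (World L) := {s | s.1 (prop n) = true}

variable {L}

theorem mem_boxedTrue {t : Fml → Bool} {A : Fml} :
    A ∈ boxedTrue L t ↔ A.box ∈ L ∧ t A.box = true := by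
  simp only [boxedTrue, List.mem_filterMap]
  constructor
  · rintro ⟨B, hB, h⟩
    cases B <;> simp at h
    obtain ⟨ht, rfl⟩ := h
    exact ⟨hB, ht⟩
  · exact fun ⟨hA, ht⟩ => ⟨A.box, hA, by simp [ht]⟩

theorem rel_trans : Transitive (Rel L) := by
  rintro s u x ⟨hsu, -⟩ ⟨hux, A, hAx, hAu⟩
  exact ⟨fun B hB => hux B (hsu B hB).1, A, hAx, fun hAs => hAu (hsu A hAs).1⟩

theorem rel_locallyFiniteHeight : LocallyFiniteHeight (Rel L) := by
  classical
  refine LocallyFiniteHeight.of_bounded_rank (fun s => (boxedTrue L s.1).toFinset.card) L.length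
    (fun s => (List.toFinset_card_le _).trans (List.length_filterMap_le _ _)) fun s u h => ?_
  refine Finset.card_lt_card ⟨fun A hA => ?_, fun hus => ?_⟩
  · simp only [List.mem_toFinset] at hA ⊢
    exact (h.1 A hA).1
  · obtain ⟨A, hAu, hAs⟩ := h.2
    exact hAs (List.mem_toFinset.mp (hus (List.mem_toFinset.mpr hAu)))

theorem World.eq_of_imp (s : World L) {A : Fml} {b : Bool} (hA : A ∈ L)
    (h : GLProv ((diagram L s.1).imp (signed b A))) : s.1 A = b :=
  s.2.eq_of_imp_diagram (imp_self _) hA h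

theorem World.top_eq (s : World L) (h : top ∈ L) : s.1 top = true :=
  s.eq_of_imp h (imp_intro _ (taut fun _ => rfl))

theorem World.and_eq (s : World L) {A B : Fml} (h : A.and B ∈ L) (hA : A ∈ L) (hB : B ∈ L) :
    s.1 (A.and B) = (s.1 A && s.1 B) :=
  s.eq_of_imp h ((imp_and (diagram_imp_signed hA) (diagram_imp_signed hB)).imp_trans
    (signed_and _ _ A B))

theorem World.neg_eq (s : World L) {A : Fml} (h : A.neg ∈ L) (hA : A ∈ L) :
    s.1 A.neg = !s.1 A :=
  s.eq_of_imp h ((diagram_imp_signed hA).imp_trans (signed_neg _ A))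

/-- Were it inconsistent, Löb's axiom would make the diagram of `s`, which proves
`□(boxedConj L s.1)` by axiom 4, prove `□A`. -/
theorem consistent_of_box_eq_false {s : World L} {A : Fml} (hA : A.box ∈ L)
    (hs : s.1 A.box = false) : GLConsistent (A.box.and (A.neg.and (boxedConj L s.1))) := by
  intro h
  have h₁ : GLProv ((boxedConj L s.1).imp (A.box.imp A)) := mp (taut fun _ => by simp; grind) h
  have h₂ : GLProv ((diagram L s.1).imp (boxedConj L s.1).box) := by
    refine imp_box_conj ?_
    simp only [List.mem_map]
    rintro _ ⟨B, hB, rfl⟩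
    obtain ⟨hBL, hBs⟩ := mem_boxedTrue.mp hB
    have hB' : GLProv ((diagram L s.1).imp B.box) := by
      simpa [hBs, signed] using diagram_imp_signed (t := s.1) hBL
    exact (imp_and (hB'.imp_trans (four B)) hB').imp_trans (box_and _ _)
  have h₃ := h₂.imp_trans ((box_mono h₁).imp_trans (axLob_subst A))
  simpa [hs] using s.eq_of_imp hA (b := true) h₃

section SubformulaClosed

variable (hL : ∀ A ∈ L, A.subformulas ⊆ L)
include hL

theorem exists_rel_of_box_eq_false {s : World L} {A : Fml} (hA : A.box ∈ L)
    (hs : s.1 A.box = false) : ∃ u, Rel L s u ∧ u.1 A = false := by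
  have hmem : ∀ {B}, B.box ∈ L → B ∈ L :=
    fun hB => hL _ hB (by simp [subformulas, mem_subformulas_self])
  obtain ⟨t, ht⟩ := (consistent_of_box_eq_false hA hs).exists_and_diagram L
  have ht' : ∀ {B b}, B ∈ L → GLProv ((A.box.and (A.neg.and (boxedConj L s.1))).imp (signed b B)) →
      t B = b := fun hB h => ht.eq_of_imp_diagram (and_right _ _) hB ((and_left _ _).imp_trans h)
  refine ⟨⟨t, ht.mono (and_right _ _)⟩, ⟨fun B hB => ?_, A, ?_, ?_⟩, ?_⟩
  · obtain ⟨hBL, -⟩ := mem_boxedTrue.mp hB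
    have hB' : GLProv ((A.box.and (A.neg.and (boxedConj L s.1))).imp (B.box.and B)) :=
      (and_right _ _).imp_trans
        ((and_right _ _).imp_trans (conj_imp_of_mem (List.mem_map_of_mem hB)))
    exact ⟨mem_boxedTrue.mpr ⟨hBL, ht' hBL (b := true) (hB'.imp_trans (and_left _ _))⟩,
      ht' (hmem hBL) (b := true) (hB'.imp_trans (and_right _ _))⟩
  · exact mem_boxedTrue.mpr ⟨hA, ht' hA (b := true) (and_left _ _)⟩
  · simp [mem_boxedTrue, hs]
  · exact ht' (hmem hA) (b := false) ((and_right _ _).imp_trans (and_left _ _))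

theorem truth_iff_eq_true {A : Fml} (hA : A ∈ L) (s : World L) :
    Truth (Rel L) (val L) A s ↔ s.1 A = true := by
  induction A generalizing s with
  | prop n => rfl
  | top => simp [Truth, s.top_eq hA]
  | and A B ihA ihB =>
    have hA' : A ∈ L := hL _ hA (by simp [subformulas, mem_subformulas_self])
    have hB' : B ∈ L := hL _ hA (by simp [subformulas, mem_subformulas_self])
    simp [Truth, ihA hA', ihB hB', s.and_eq hA hA' hB']
  | neg A ih =>
    have hA' : A ∈ L := hL _ hA (by simp [subformulas, mem_subformulas_self])
    simp [Truth, ih hA', s.neg_eq hA hA']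
  | box A ih =>
    have hA' : A ∈ L := hL _ hA (by simp [subformulas, mem_subformulas_self])
    refine ⟨fun h => ?_, fun h u hsu => (ih hA' u).mpr (hsu.1 A (mem_boxedTrue.mpr ⟨hA, h⟩)).2⟩
    by_contra hs
    obtain ⟨u, hsu, hu⟩ := exists_rel_of_box_eq_false hL hA (by simpa using hs)
    simp [(ih hA' u).mp (h u hsu)] at hu

end SubformulaClosed

theorem exists_world_not_truth {φ : Fml} (hφ : ¬ GLProv φ) :
    ∃ s : World φ.subformulas, ¬ Truth (Rel _) (val _) φ s := by
  have hcon : GLConsistent φ.neg := fun h => hφ (.mp (.taut fun _ => by simp) h)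
  obtain ⟨t, ht⟩ := hcon.exists_and_diagram φ.subformulas
  refine ⟨⟨t, ht.mono (and_right _ _)⟩, fun h => ?_⟩
  have hφt : t φ = false :=
    ht.eq_of_imp_diagram (and_right _ _) (mem_subformulas_self φ) (and_left _ _)
  exact Bool.false_ne_true (hφt.symm.trans
    ((truth_iff_eq_true (fun _ => subformulas_subset_of_mem) (mem_subformulas_self φ) _).mp h))

end Canonical

theorem stmt18 (φ : Fml) :
    GLProv φ ↔ ∀ (W : Type) [Nonempty W] (R : W → W → Prop),
      Transitive R → LocallyFiniteHeight R → Valid R φ := by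
  refine ⟨fun h W _ R hT hL => h.valid hT hL.wellFounded_flip, fun H => ?_⟩
  by_contra hφ
  obtain ⟨s, hs⟩ := Canonical.exists_world_not_truth hφ
  have : Nonempty (Canonical.World φ.subformulas) := ⟨s⟩
  exact hs (H _ _ Canonical.rel_trans Canonical.rel_locallyFiniteHeight _ s)
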